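/- Let n ≥ 2, S ⊆ ℤ^n, and g : ℤ^k → ℤ an operation. Assume there exists a majority operation h : ℤ³ → ℤ such that every g-closed subset R ⊆ ℤ² is h-closed. Then the following are equivalent: (i) S is closed under some majority operation and under g; (ii) S is closed under some majority operation, and for each 1 ≤ i < j ≤ n, π_{i,j}(S) is g-closed; (iii) S = ⋈_{1≤i<j≤n} π_{i,j}(S), and for each 1 ≤ i < j ≤ n, π_{i,j}(S) is g-closed; (iv) S = ⋈_{1≤i<j≤n} cl_g(π_{i,j}(S)). -/

import Mathlib

/-!
A set closed under a majority operation is the join of its binary projections (Baker–Pixley):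
a point agreeing with members of `S` on every pair of coordinates agrees with a member on every
finite set of coordinates. Closedness under `g` passes to coordinate projections and to joins,
and by hypothesis every join of `g`-closed binary relations is closed under the majority
operation `h`.
-/

/-- Componentwise closedness of a set of `ι`-indexed integer vectors under a
`k`-ary operation `f : ℤ^k → ℤ`. -/
def CptClosed {k : ℕ} {ι : Type*} (f : (Fin k → ℤ) → ℤ) (S : Set (ι → ℤ)) : Prop :=
  ∀ x : Fin k → ι → ℤ, (∀ l, x l ∈ S) → (fun i => f (fun l => x l i)) ∈ S

/-- `f : ℤ³ → ℤ` is a majority operation. -/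
def IsMajorityOp (f : (Fin 3 → ℤ) → ℤ) : Prop :=
  ∀ a b : ℤ, f ![a, a, b] = a ∧ f ![a, b, a] = a ∧ f ![b, a, a] = a

/-- `S` is closed under some majority operation. -/
def MajClosed {ι : Type*} (S : Set (ι → ℤ)) : Prop :=
  ∃ f : (Fin 3 → ℤ) → ℤ, IsMajorityOp f ∧ CptClosed f S

/-- The projection `π_{i,j}(x) = (x_i, x_j)`. -/
def proj2 {n : ℕ} (i j : Fin n) (x : Fin n → ℤ) : Fin 2 → ℤ := ![x i, x j]

/-- The projection `π_{i,j}(S)`. -/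
def projSet {n : ℕ} (i j : Fin n) (S : Set (Fin n → ℤ)) : Set (Fin 2 → ℤ) :=
  proj2 i j '' S

/-- The join `⋈_{1 ≤ i < j ≤ n} F i j`. -/
def joinPairs {n : ℕ} (F : Fin n → Fin n → Set (Fin 2 → ℤ)) : Set (Fin n → ℤ) :=
  {x | ∀ i j : Fin n, i < j → proj2 i j x ∈ F i j}

/-- The `f`-closure of `S`: the intersection of all `f`-closed supersets of `S`. -/
def clOp {k m : ℕ} (f : (Fin k → ℤ) → ℤ) (S : Set (Fin m → ℤ)) : Set (Fin m → ℤ) :=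
  ⋂₀ {T | S ⊆ T ∧ CptClosed f T}

/-- The directed discrete midpoint operation `μ`. -/
def muOp : (Fin 2 → ℤ) → ℤ := fun t =>
  if t 1 ≤ t 0 then ⌈((t 0 + t 1 : ℤ) : ℚ) / 2⌉ else ⌊((t 0 + t 1 : ℤ) : ℚ) / 2⌋

/-- The operation `g(x,y) = ⌈(x+y)/2⌉`. -/
def ceilAvgOp : (Fin 2 → ℤ) → ℤ := fun t => ⌈((t 0 + t 1 : ℤ) : ℚ) / 2⌉

/-- The operation `h(x,y) = ⌊(x+y)/2⌋`. -/
def floorAvgOp : (Fin 2 → ℤ) → ℤ := fun t => ⌊((t 0 + t 1 : ℤ) : ℚ) / 2⌋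

/-- The median operation on three integers. -/
def medianOp : (Fin 3 → ℤ) → ℤ := fun t =>
  max (max (min (t 0) (t 1)) (min (t 1) (t 2))) (min (t 0) (t 2))

/-- The canonical embedding `ℤ^m → ℝ^m`. -/
def toR {m : ℕ} (z : Fin m → ℤ) : Fin m → ℝ := fun l => (z l : ℝ)

/-- The integer neighborhood `N(x)` of a real vector `x`. -/
def intNbhd {m : ℕ} (x : Fin m → ℝ) : Set (Fin m → ℤ) :=
  {z | ∀ j, |(z j : ℝ) - x j| < 1}

/-- `S` is midpoint-neighbor-closed: for all `x, y ∈ S`, `N((x+y)/2) ⊆ S`. -/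
def MidpointNeighborClosed {m : ℕ} (S : Set (Fin m → ℤ)) : Prop :=
  ∀ x ∈ S, ∀ y ∈ S, ∀ z : Fin m → ℤ,
    (∀ j, |(z j : ℝ) - ((x j : ℝ) + (y j : ℝ)) / 2| < 1) → z ∈ S

/-- `S ⊆ ℤ^m` is integrally convex. -/
def IntegrallyConvex {m : ℕ} (S : Set (Fin m → ℤ)) : Prop :=
  ∀ x : Fin m → ℝ, x ∈ convexHull ℝ (toR '' S) →
    x ∈ convexHull ℝ (toR '' (S ∩ intNbhd x))

/-- The closed convex closure of `T ⊆ ℤ^m` inside `ℝ^m`: the intersection of all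
topologically closed convex sets containing `T`. -/
def closedConvexClosure {m : ℕ} (T : Set (Fin m → ℤ)) : Set (Fin m → ℝ) :=
  ⋂₀ {C : Set (Fin m → ℝ) | Convex ℝ C ∧ IsClosed C ∧ toR '' T ⊆ C}

/-- `S = cl_conv̄(S) ∩ ℤ^m`. -/
def ClosedConvexIntegral {m : ℕ} (S : Set (Fin m → ℤ)) : Prop :=
  S = {z : Fin m → ℤ | toR z ∈ closedConvexClosure S}

/-- All entries of `A` lie in `{0, -1, +1}`. -/
def UnitMatrix {mR n : ℕ} (A : Matrix (Fin mR) (Fin n) ℤ) : Prop :=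
  ∀ i j, A i j = 0 ∨ A i j = -1 ∨ A i j = 1

/-- Each row of `A` has at most `c` nonzero entries. -/
def RowSupportLE {mR n : ℕ} (A : Matrix (Fin mR) (Fin n) ℤ) (c : ℕ) : Prop :=
  ∀ i, {j | A i j ≠ 0}.ncard ≤ c

/-- `S` is representable by a UTVPI system. -/
def RepUTVPI {n : ℕ} (S : Set (Fin n → ℤ)) : Prop :=
  ∃ (mR : ℕ) (A : Matrix (Fin mR) (Fin n) ℤ) (b : Fin mR → ℝ),
    UnitMatrix A ∧ RowSupportLE A 2 ∧
    S = {x | ∀ i, b i ≤ ((∑ j, A i j * x j : ℤ) : ℝ)}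

/-- `S` is representable by an SVPI system. -/
def RepSVPI {n : ℕ} (S : Set (Fin n → ℤ)) : Prop :=
  ∃ (mR : ℕ) (A : Matrix (Fin mR) (Fin n) ℤ) (b : Fin mR → ℝ),
    UnitMatrix A ∧ RowSupportLE A 1 ∧
    S = {x | ∀ i, b i ≤ ((∑ j, A i j * x j : ℤ) : ℝ)}

/-- `S` is representable by a DC system. -/
def RepDC {n : ℕ} (S : Set (Fin n → ℤ)) : Prop :=
  ∃ (mR : ℕ) (A : Matrix (Fin mR) (Fin n) ℤ) (b : Fin mR → ℝ),
    UnitMatrix A ∧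
    (∀ i, {j | A i j = 1}.ncard ≤ 1) ∧ (∀ i, {j | A i j = -1}.ncard ≤ 1) ∧
    S = {x | ∀ i, b i ≤ ((∑ j, A i j * x j : ℤ) : ℝ)}

/-- `S` is representable by a TVPI system with possibly infinitely many inequalities. -/
def RepTVPIInf {n : ℕ} (S : Set (Fin n → ℤ)) : Prop :=
  ∃ (I : Type) (a1 a2 b : I → ℝ) (p q : I → Fin n),
    S = {x | ∀ i : I, b i ≤ a1 i * (x (p i) : ℝ) + a2 i * (x (q i) : ℝ)}

/-- `S` is 2-decomposable: `S = ⋈_{i<j} π_{i,j}(S)`. -/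
def TwoDecomposable {ι : Type*} [LinearOrder ι] (S : Set (ι → ℤ)) : Prop :=
  S = {x | ∀ i j : ι, i < j → ∃ s ∈ S, s i = x i ∧ s j = x j}

namespace CptClosed

variable {k : ℕ} {f : (Fin k → ℤ) → ℤ}

theorem image_comp {ι κ : Type*} {S : Set (ι → ℤ)} (hS : CptClosed f S) (σ : κ → ι) :
    CptClosed f ((· ∘ σ) '' S) := by
  intro x hx
  choose s hsS hs using hx
  refine ⟨fun i => f fun l => s l i, hS s hsS, ?_⟩
  funext m
  simp only [Function.comp_apply, ← hs]

theorem preimage_comp {ι κ : Type*} {R : Set (κ → ℤ)} (hR : CptClosed f R) (σ : κ → ι) :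
    CptClosed f ((· ∘ σ) ⁻¹' R) :=
  fun x hx => hR (fun l => x l ∘ σ) hx

end CptClosed

theorem proj2_eq_comp {n : ℕ} (i j : Fin n) (x : Fin n → ℤ) : proj2 i j x = x ∘ ![i, j] := by
  funext l
  fin_cases l <;> rfl

theorem proj2_eq_proj2_iff {n : ℕ} {i j : Fin n} {x y : Fin n → ℤ} :
    proj2 i j x = proj2 i j y ↔ x i = y i ∧ x j = y j := by
  simp [proj2]

theorem CptClosed.projSet {k n : ℕ} {f : (Fin k → ℤ) → ℤ} {S : Set (Fin n → ℤ)}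
    (hS : CptClosed f S) (i j : Fin n) : CptClosed f (projSet i j S) := by
  simpa only [_root_.projSet, proj2_eq_comp] using hS.image_comp ![i, j]

theorem cptClosed_joinPairs {k n : ℕ} {f : (Fin k → ℤ) → ℤ}
    {F : Fin n → Fin n → Set (Fin 2 → ℤ)} (hF : ∀ i j, i < j → CptClosed f (F i j)) :
    CptClosed f (joinPairs F) := by
  intro x hx i j hij
  rw [proj2_eq_comp]
  exact (hF i j hij).preimage_comp ![i, j] x fun l => by
    simpa only [Set.mem_preimage, proj2_eq_comp] using hx l i j hij

section Closure

variable {k m : ℕ} (f : (Fin k → ℤ) → ℤ) (T : Set (Fin m → ℤ))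

theorem subset_clOp : T ⊆ clOp f T := fun _ hz _ hT' => hT'.1 hz

theorem cptClosed_clOp : CptClosed f (clOp f T) :=
  fun x hx T' hT' => hT'.2 x fun l => hx l T' hT'

variable {f T}

theorem clOp_eq_of_cptClosed (h : CptClosed f T) : clOp f T = T :=
  subset_antisymm (fun _ hz => hz T ⟨subset_rfl, h⟩) (subset_clOp f T)

end Closure

theorem joinPairs_clOp_eq {k n : ℕ} {f : (Fin k → ℤ) → ℤ}
    {F : Fin n → Fin n → Set (Fin 2 → ℤ)} (hF : ∀ i j, i < j → CptClosed f (F i j)) :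
    joinPairs (fun i j => clOp f (F i j)) = joinPairs F := by
  ext x
  refine forall₂_congr fun i j => forall_congr' fun hij => ?_
  simp only [clOp_eq_of_cptClosed (hF i j hij)]

namespace IsMajorityOp

variable {f : (Fin 3 → ℤ) → ℤ}

theorem apply_eq_of_two_eq (hf : IsMajorityOp f) {u v w a : ℤ}
    (h : u = a ∧ v = a ∨ u = a ∧ w = a ∨ v = a ∧ w = a) : f ![u, v, w] = a := by
  rcases h with ⟨rfl, rfl⟩ | ⟨rfl, rfl⟩ | ⟨rfl, rfl⟩
  exacts [(hf _ _).1, (hf _ _).2.1, (hf _ _).2.2]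

/-- Inserting `c` into `T`, the witnesses for `{a, b} ∪ T`, `{a, c} ∪ T` and `{b, c} ∪ T` agree
with `x` at every point of `{a, b, c} ∪ T` at least twice, so their majority is a witness for
`{a, b, c} ∪ T`. -/
theorem exists_eqOn_of_forall_pair {ι : Type*} [DecidableEq ι] (hf : IsMajorityOp f)
    {S : Set (ι → ℤ)} (hS : CptClosed f S) {x : ι → ℤ}
    (hx : ∀ a b, ∃ s ∈ S, s a = x a ∧ s b = x b) (T : Finset ι) (a b : ι) :
    ∃ s ∈ S, ∀ i ∈ insert a (insert b T), s i = x i := by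
  induction T using Finset.induction_on generalizing a b with
  | empty =>
    obtain ⟨s, hs, ha, hb⟩ := hx a b
    exact ⟨s, hs, by simp [ha, hb]⟩
  | insert c T _ ih =>
    obtain ⟨s₁, hs₁, h₁⟩ := ih a b
    obtain ⟨s₂, hs₂, h₂⟩ := ih a c
    obtain ⟨s₃, hs₃, h₃⟩ := ih b c
    refine ⟨fun i => f ![s₁ i, s₂ i, s₃ i], ?_, fun i hi => hf.apply_eq_of_two_eq ?_⟩
    · convert hS ![s₁, s₂, s₃] (by simp [Fin.forall_fin_succ, *]) using 1
      funext i
      congr 1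
      funext l
      fin_cases l <;> rfl
    · simp only [Finset.mem_insert] at hi h₁ h₂ h₃
      rcases hi with rfl | rfl | rfl | hi
      · exact .inl ⟨h₁ _ (.inl rfl), h₂ _ (.inl rfl)⟩
      · exact .inr (.inl ⟨h₁ _ (.inr (.inl rfl)), h₃ _ (.inl rfl)⟩)
      · exact .inr (.inr ⟨h₂ _ (.inr (.inl rfl)), h₃ _ (.inr (.inl rfl))⟩)
      · exact .inl ⟨h₁ _ (.inr (.inr hi)), h₂ _ (.inr (.inr hi))⟩

theorem mem_of_forall_pair {ι : Type*} [Finite ι] [Nonempty ι] (hf : IsMajorityOp f)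
    {S : Set (ι → ℤ)} (hS : CptClosed f S) {x : ι → ℤ}
    (hx : ∀ a b, ∃ s ∈ S, s a = x a ∧ s b = x b) : x ∈ S := by
  classical
  have := Fintype.ofFinite ι
  let a : ι := Classical.arbitrary ι
  obtain ⟨s, hs, hsx⟩ := hf.exists_eqOn_of_forall_pair hS hx Finset.univ a a
  rwa [← funext fun i => hsx i (by simp)]

end IsMajorityOp

theorem subset_joinPairs_projSet {n : ℕ} (S : Set (Fin n → ℤ)) :
    S ⊆ joinPairs (fun i j => projSet i j S) :=
  fun x hx _ _ _ => ⟨x, hx, rfl⟩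

theorem exists_eq_eq_of_mem_joinPairs_projSet {n : ℕ} (hn : 2 ≤ n) {S : Set (Fin n → ℤ)}
    {x : Fin n → ℤ} (hx : x ∈ joinPairs (fun i j => projSet i j S)) (a b : Fin n) :
    ∃ s ∈ S, s a = x a ∧ s b = x b := by
  have pair_of_lt : ∀ {a b : Fin n}, a < b → ∃ s ∈ S, s a = x a ∧ s b = x b := fun hab =>
    let ⟨s, hs, he⟩ := hx _ _ hab
    ⟨s, hs, proj2_eq_proj2_iff.mp he⟩
  rcases lt_trichotomy a b with hab | rfl | hab
  · exact pair_of_lt hab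
  · have : Nontrivial (Fin n) := Fin.nontrivial_iff_two_le.mpr hn
    obtain ⟨c, hc⟩ := exists_ne a
    rcases hc.lt_or_gt with hc | hc
    · obtain ⟨s, hs, -, hs'⟩ := pair_of_lt hc
      exact ⟨s, hs, hs', hs'⟩
    · obtain ⟨s, hs, hs', -⟩ := pair_of_lt hc
      exact ⟨s, hs, hs', hs'⟩
  · obtain ⟨s, hs, hb, ha⟩ := pair_of_lt hab
    exact ⟨s, hs, ha, hb⟩

theorem MajClosed.eq_joinPairs_projSet {n : ℕ} (hn : 2 ≤ n) {S : Set (Fin n → ℤ)}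
    (hS : MajClosed S) : S = joinPairs (fun i j => projSet i j S) := by
  obtain ⟨f, hf, hfS⟩ := hS
  have : Nonempty (Fin n) := ⟨⟨0, by omega⟩⟩
  exact (subset_joinPairs_projSet S).antisymm fun x hx =>
    hf.mem_of_forall_pair hfS (exists_eq_eq_of_mem_joinPairs_projSet hn hx)

theorem stmt_3_general {n k : ℕ} (hn : 2 ≤ n) (S : Set (Fin n → ℤ))
    (g : (Fin k → ℤ) → ℤ)
    (hmaj : ∃ h : (Fin 3 → ℤ) → ℤ, IsMajorityOp h ∧
      ∀ R : Set (Fin 2 → ℤ), CptClosed g R → CptClosed h R) :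
    ((MajClosed S ∧ CptClosed g S) ↔
      (MajClosed S ∧ ∀ i j : Fin n, i < j → CptClosed g (projSet i j S))) ∧
    ((MajClosed S ∧ ∀ i j : Fin n, i < j → CptClosed g (projSet i j S)) ↔
      (S = joinPairs (fun i j => projSet i j S) ∧
        ∀ i j : Fin n, i < j → CptClosed g (projSet i j S))) ∧
    ((S = joinPairs (fun i j => projSet i j S) ∧
        ∀ i j : Fin n, i < j → CptClosed g (projSet i j S)) ↔
      S = joinPairs (fun i j => clOp g (projSet i j S))) := by
  obtain ⟨h, hh, hgh⟩ := hmaj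
  refine ⟨⟨fun ⟨hm, hg⟩ => ⟨hm, fun i j _ => hg.projSet i j⟩, fun ⟨hm, hp⟩ => ⟨hm, ?_⟩⟩,
    ⟨fun ⟨hm, hp⟩ => ⟨hm.eq_joinPairs_projSet hn, hp⟩, fun ⟨hS, hp⟩ => ⟨⟨h, hh, ?_⟩, hp⟩⟩,
    ⟨fun ⟨hS, hp⟩ => ?_, fun hS => ?_⟩⟩
  · rw [hm.eq_joinPairs_projSet hn]
    exact cptClosed_joinPairs hp
  · rw [hS]
    exact cptClosed_joinPairs fun i j hij => hgh _ (hp i j hij)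
  · rwa [joinPairs_clOp_eq hp]
  · have hg : CptClosed g S := by
      rw [hS]
      exact cptClosed_joinPairs fun i j _ => cptClosed_clOp g _
    have hp : ∀ i j : Fin n, i < j → CptClosed g (projSet i j S) := fun i j _ => hg.projSet i j
    exact ⟨by rwa [joinPairs_clOp_eq hp] at hS, hp⟩

/-- under the assumption that some majority operation `h` preserves all
`g`-closed subsets of `ℤ²`, properties (i)-(iv) are all equivalent. -/
theorem stmt_3 {n k : ℕ} (hn : 2 ≤ n) (hk : 1 ≤ k) (S : Set (Fin n → ℤ))
    (g : (Fin k → ℤ) → ℤ)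
    (hmaj : ∃ h : (Fin 3 → ℤ) → ℤ, IsMajorityOp h ∧
      ∀ R : Set (Fin 2 → ℤ), CptClosed g R → CptClosed h R) :
    ((MajClosed S ∧ CptClosed g S) ↔
      (MajClosed S ∧ ∀ i j : Fin n, i < j → CptClosed g (projSet i j S))) ∧
    ((MajClosed S ∧ ∀ i j : Fin n, i < j → CptClosed g (projSet i j S)) ↔
      (S = joinPairs (fun i j => projSet i j S) ∧
        ∀ i j : Fin n, i < j → CptClosed g (projSet i j S))) ∧
    ((S = joinPairs (fun i j => projSet i j S) ∧
        ∀ i j : Fin n, i < j → CptClosed g (projSet i j S)) ↔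
      S = joinPairs (fun i j => clOp g (projSet i j S))) :=
  stmt_3_general hn S g hmaj
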